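/- Let $a > 1$, $0 < b \le 1$, and $\tau \ge 1$ be real numbers, and define $\Gamma_{a,b}:[0,\infty)\to\mathbb{R}$ by $\Gamma_{a,b}(t) = t^a (\ln(\tau+t))^b$. Then $\Gamma_{a,b}$ is convex on $[0,\infty)$. -/

import Mathlib

theorem stmt_3 (a b τ : ℝ) (ha : 1 < a) (hb0 : 0 < b) (hb1 : b ≤ 1) (hτ : 1 ≤ τ) :
    ConvexOn ℝ (Set.Ici (0:ℝ)) (fun t : ℝ => t ^ a * (Real.log (τ + t)) ^ b) := by
  set f : ℝ → ℝ := fun t : ℝ => t ^ a * (Real.log (τ + t)) ^ b with hf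
  set g : ℝ → ℝ := fun t : ℝ => a * t ^ (a-1) * Real.log (τ + t) ^ b
      + t ^ a * (b * Real.log (τ + t) ^ (b-1) * (τ + t)⁻¹) with hg
  have hderiv : ∀ x : ℝ, 0 < x → HasDerivAt f (g x) x := by
    intro x hx
    have hcx : (0:ℝ) < τ + x := by linarith
    have hLx : 0 < Real.log (τ + x) := Real.log_pos (by linarith)
    have h1 : HasDerivAt (fun t : ℝ => t ^ a) (a * x ^ (a-1)) x :=
      Real.hasDerivAt_rpow_const (Or.inl hx.ne')
    have hlog : HasDerivAt (fun t : ℝ => Real.log (τ + t)) ((τ+x)⁻¹) x := by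
      have := ((hasDerivAt_id x).const_add τ).log hcx.ne'
      simpa using this
    have hv : HasDerivAt (fun t : ℝ => Real.log (τ + t) ^ b)
        (b * Real.log (τ+x) ^ (b-1) * (τ+x)⁻¹) x := by
      have h2 : HasDerivAt (fun y : ℝ => y ^ b) (b * Real.log (τ+x) ^ (b-1)) (Real.log (τ+x)) :=
        Real.hasDerivAt_rpow_const (Or.inl hLx.ne')
      exact h2.comp x hlog
    simpa [hg, mul_assoc, Pi.mul_def] using h1.mul hv
  have key : ∀ x : ℝ, 0 < x → ∃ D, HasDerivAt g D x ∧ 0 ≤ D := by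
    intro x hx
    have hcx : (1:ℝ) < τ + x := by linarith
    have hc0 : (0:ℝ) < τ + x := by linarith
    set L := Real.log (τ+x) with hL
    have hLx : 0 < L := Real.log_pos hcx
    have hlog : HasDerivAt (fun t : ℝ => Real.log (τ + t)) ((τ+x)⁻¹) x := by
      have := ((hasDerivAt_id x).const_add τ).log hc0.ne'
      simpa using this
    have hinv : HasDerivAt (fun t : ℝ => (τ+t)⁻¹) (-1 / (τ+x)^2) x := by
      have := ((hasDerivAt_id x).const_add τ).inv hc0.ne'
      simpa [Pi.inv_def] using this
    have hu : HasDerivAt (fun t : ℝ => t ^ a) (a * x ^ (a-1)) x :=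
      Real.hasDerivAt_rpow_const (Or.inl hx.ne')
    have hu1 : HasDerivAt (fun t : ℝ => a * t ^ (a-1)) (a * ((a-1) * x ^ (a-1-1))) x :=
      (Real.hasDerivAt_rpow_const (Or.inl hx.ne')).const_mul a
    have hv : HasDerivAt (fun t : ℝ => Real.log (τ + t) ^ b)
        (b * L ^ (b-1) * (τ+x)⁻¹) x := by
      have h2 : HasDerivAt (fun y : ℝ => y ^ b) (b * L ^ (b-1)) L :=
        Real.hasDerivAt_rpow_const (Or.inl hLx.ne')
      exact h2.comp x hlog
    have hv1 : HasDerivAt (fun t : ℝ => b * Real.log (τ + t) ^ (b-1))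
        (b * ((b-1) * L ^ (b-1-1) * (τ+x)⁻¹)) x := by
      have h2 : HasDerivAt (fun y : ℝ => y ^ (b-1)) ((b-1) * L ^ (b-1-1)) L :=
        Real.hasDerivAt_rpow_const (Or.inl hLx.ne')
      exact (h2.comp x hlog).const_mul b
    have hw := hv1.mul hinv
    have hD := (hu1.mul hv).add (hu.mul hw)
    refine ⟨_, hD, ?_⟩
    set X := x ^ (a-2) with hX
    set Y := L ^ (b-2) with hYd
    have e1 : x ^ (a-1) = X * x := by
      rw [hX, show a-1 = (a-2)+1 by ring, Real.rpow_add_one hx.ne']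
    have e2 : x ^ a = X * x * x := by
      conv_lhs => rw [show a = (a-2)+1+1 by ring]
      rw [Real.rpow_add_one hx.ne', Real.rpow_add_one hx.ne']
    have e3 : x ^ (a-1-1) = X := by rw [show a-1-1 = a-2 by ring]
    have f1 : L ^ (b-1) = Y * L := by
      rw [hYd, show b-1 = (b-2)+1 by ring, Real.rpow_add_one hLx.ne']
    have f0 : L ^ b = Y * L * L := by
      conv_lhs => rw [show b = (b-2)+1+1 by ring]
      rw [Real.rpow_add_one hLx.ne', Real.rpow_add_one hLx.ne']
    have f2 : L ^ (b-1-1) = Y := by rw [show b-1-1 = b-2 by ring]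
    have hXpos : 0 < X := Real.rpow_pos_of_pos hx _
    have hYpos : 0 < Y := Real.rpow_pos_of_pos hLx _
    have hlog1 : 1 - (1+x)⁻¹ ≤ Real.log (1+x) := by
      have h := Real.log_le_sub_one_of_pos (show (0:ℝ) < (1+x)⁻¹ by positivity)
      rw [Real.log_inv] at h
      linarith
    have h1x : (0:ℝ) < 1 + x := by linarith
    have hx1 : x ≤ Real.log (1+x) * (1+x) := by
      have h2 := mul_le_mul_of_nonneg_right hlog1 h1x.le
      rw [sub_mul, one_mul, inv_mul_cancel₀ h1x.ne'] at h2
      linarith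
    have hL1 : Real.log (1+x) ≤ L := Real.log_le_log h1x (by linarith)
    have hsL : x ≤ L * (τ+x) :=
      hx1.trans (mul_le_mul hL1 (by linarith) h1x.le hLx.le)
    have hxc : x ≤ τ + x := by linarith
    have hE : 0 ≤ a*(a-1)*L^2*(τ+x)^2 + 2*a*b*x*L*(τ+x) + b*(b-1)*x^2 - b*x^2*L := by
      nlinarith [mul_nonneg (mul_nonneg hb0.le hx.le) (sub_nonneg.2 hsL),
        mul_nonneg (mul_nonneg (mul_nonneg hb0.le hx.le) hLx.le) (sub_nonneg.2 hxc),
        mul_nonneg (sub_nonneg.2 ha.le)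
          (mul_nonneg (mul_nonneg (mul_nonneg hb0.le hx.le) hLx.le) hc0.le),
        mul_nonneg (sub_nonneg.2 ha.le) (mul_nonneg (by positivity : (0:ℝ) ≤ a)
          (mul_nonneg (mul_nonneg (mul_nonneg hLx.le hLx.le) hc0.le) hc0.le)),
        sq_nonneg (b*x)]
    refine le_trans (div_nonneg (mul_nonneg (mul_nonneg hXpos.le hYpos.le) hE)
      (sq_nonneg (τ+x))) (le_of_eq ?_)
    simp only [Pi.mul_apply, ← hL]
    rw [e1, e2, e3, f0, f1, f2]
    field_simp
    ring
  have hio : interior (Set.Ici (0:ℝ)) = Set.Ioi 0 := interior_Ici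
  have hgderiv : ∀ x : ℝ, 0 < x → deriv f x = g x := fun x hx => (hderiv x hx).deriv
  have hev : ∀ x : ℝ, 0 < x → deriv f =ᶠ[nhds x] g := by
    intro x hx
    filter_upwards [isOpen_Ioi.mem_nhds hx] with y hy
    exact hgderiv y hy
  apply convexOn_of_deriv2_nonneg (convex_Ici 0)
  · intro x hx
    have hcx : (0:ℝ) < τ + x := by
      have : (0:ℝ) ≤ x := hx
      linarith
    have h1 : ContinuousAt (fun t : ℝ => t ^ a) x :=
      Real.continuousAt_rpow_const x a (Or.inr (by linarith))
    have h2 : ContinuousAt (fun t : ℝ => Real.log (τ + t)) x :=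
      (Real.continuousAt_log hcx.ne').comp ((continuous_const.add continuous_id).continuousAt)
    have h3 : ContinuousAt (fun t : ℝ => Real.log (τ + t) ^ b) x :=
      (Real.continuousAt_rpow_const _ b (Or.inr hb0.le)).comp h2
    exact (h1.mul h3).continuousWithinAt
  · rw [hio]
    intro x hx
    exact (hderiv x hx).differentiableAt.differentiableWithinAt
  · rw [hio]
    intro x hx
    obtain ⟨D, hD, -⟩ := key x hx
    exact (hD.differentiableAt.congr_of_eventuallyEq (hev x hx)).differentiableWithinAt
  · rw [hio]
    intro x hx
    obtain ⟨D, hD, hDnn⟩ := key x hx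
    have : deriv (deriv f) x = D := by
      rw [Filter.EventuallyEq.deriv_eq (hev x hx)]
      exact hD.deriv
    simpa [Function.iterate_succ, Function.comp, this] using hDnn
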